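/- Fix complex q with 0<|q|<1, integers A even and 1≤r≤A/2 with A ≥ r/2. Then lim_{n→∞} (1/n²) log|S_n(q)| = -(1/2) r(A-2r) log|1/q|, where S_n(q) = ∑_{k≥1} q^k R_n(q^k;q). -/

import Mathlib

/-- The function `R_n(T;q)` of the paper, for complex `q ≠ 0`. -/
noncomputable def Rc (A r n : ℕ) (q T : ℂ) : ℂ :=
  (∏ i ∈ Finset.range n, (1 - q ^ (i + 1))) ^ (A - 2 * r) *
    q ^ (-(((A : ℂ) - 2 * r) * (n : ℂ) / 4)) *
    ((∏ i ∈ Finset.range (r * n), (1 - q ^ ((i : ℤ) - (r * n : ℤ)) * T)) *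
      ∏ i ∈ Finset.range (r * n), (1 - q ^ (n + 1 + i) * T)) /
    (∏ i ∈ Finset.range (n + 1), (1 - q ^ i * T)) ^ A *
    T ^ ((A - 2 * r) * n / 2)

noncomputable def Complex.abs : AbsoluteValue ℂ ℝ :=
  IsAbsoluteValue.toAbsoluteValue (norm : ℂ → ℝ)

theorem Complex.norm_eq_abs (z : ℂ) : ‖z‖ = Complex.abs z := rfl

theorem Complex.abs_abs (z : ℂ) : |Complex.abs z| = Complex.abs z := abs_of_nonneg (norm_nonneg z)

theorem Complex.continuous_abs : Continuous Complex.abs := continuous_norm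

theorem Complex.abs_cpow_real (x : ℂ) (y : ℝ) :
    Complex.abs (x ^ (y : ℂ)) = Complex.abs x ^ y := norm_cpow_real x y

open Finset Filter Real

namespace SnAux

/-- `Pp q a N = ∏_{i<N} (1 - q^{i+a})`. -/
noncomputable def Pp (q : ℂ) (a N : ℕ) : ℂ := ∏ i ∈ Finset.range N, (1 - q ^ (i + a))

noncomputable def Mu (q : ℂ) : ℝ := Real.exp (Complex.abs q / (1 - Complex.abs q))
noncomputable def cI (q : ℂ) : ℝ := Real.exp (-(Complex.abs q / (1 - Complex.abs q) ^ 2))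

variable {q : ℂ}

lemma rho_pow_le (hq1 : Complex.abs q < 1) {s : ℕ} (hs : 1 ≤ s) :
    Complex.abs q ^ s ≤ Complex.abs q := by
  calc Complex.abs q ^ s ≤ Complex.abs q ^ 1 :=
        pow_le_pow_of_le_one (Complex.abs.nonneg q) hq1.le hs
  _ = Complex.abs q := pow_one _

lemma factor_ne_zero (hq1 : Complex.abs q < 1) {s : ℕ} (hs : 1 ≤ s) :
    (1 : ℂ) - q ^ s ≠ 0 := by
  intro h
  have h2 : q ^ s = 1 := by linear_combination -h
  have : Complex.abs q ^ s ≤ Complex.abs q := rho_pow_le hq1 hs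
  rw [← map_pow, h2] at this
  simp at this
  linarith

lemma abs_factor_le (s : ℕ) : Complex.abs (1 - q ^ s) ≤ 1 + Complex.abs q ^ s := by
  have := norm_sub_le (1 : ℂ) (q ^ s)
  simpa [Complex.norm_eq_abs] using this

lemma abs_factor_ge (s : ℕ) : 1 - Complex.abs q ^ s ≤ Complex.abs (1 - q ^ s) := by
  have := norm_sub_norm_le (1 : ℂ) (q ^ s)
  simpa [Complex.norm_eq_abs] using this

lemma sum_rho_le (hq1 : Complex.abs q < 1) (a N : ℕ) :
    ∑ i ∈ Finset.range N, Complex.abs q ^ (i + a) ≤ Complex.abs q ^ a / (1 - Complex.abs q) := by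
  set x := Complex.abs q with hx
  have hx0 : 0 ≤ x := Complex.abs.nonneg q
  have hx1 : (0:ℝ) < 1 - x := by linarith
  have he : ∑ i ∈ Finset.range N, x ^ (i + a) = x ^ a * ∑ i ∈ Finset.range N, x ^ i := by
    rw [Finset.mul_sum]
    exact Finset.sum_congr rfl fun i _ => by rw [← pow_add]; ring_nf
  rw [he]
  have hgeom : ∑ i ∈ Finset.range N, x ^ i ≤ (1 - x)⁻¹ := by
    have h1 := Summable.sum_le_tsum (Finset.range N) (fun i _ => pow_nonneg hx0 i)
      (summable_geometric_of_lt_one hx0 hq1)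
    rwa [tsum_geometric_of_lt_one hx0 hq1] at h1
  calc x ^ a * ∑ i ∈ Finset.range N, x ^ i ≤ x ^ a * (1 - x)⁻¹ :=
        mul_le_mul_of_nonneg_left hgeom (pow_nonneg hx0 a)
  _ = x ^ a / (1 - x) := by ring

lemma exp_neg_le_one_sub (hq1 : Complex.abs q < 1) {x : ℝ} (hx0 : 0 ≤ x)
    (hx : x ≤ Complex.abs q) : Real.exp (-(x / (1 - Complex.abs q))) ≤ 1 - x := by
  set ρ := Complex.abs q with hρ
  have hρ0 : 0 ≤ ρ := Complex.abs.nonneg q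
  have h1 : (0:ℝ) < 1 - ρ := by linarith
  set y := x / (1 - ρ) with hy
  have hy0 : 0 ≤ y := div_nonneg hx0 h1.le
  have h2 : y + 1 ≤ Real.exp y := Real.add_one_le_exp y
  have h3 : 1 ≤ (1 - x) * Real.exp y := by
    have key : 1 ≤ (1 - x) * (1 + y) := by
      have : (1 - x) * (1 + y) - 1 = x * (ρ - x) / (1 - ρ) := by
        rw [hy]
        field_simp
        ring
      have hpos : 0 ≤ x * (ρ - x) / (1 - ρ) :=
        div_nonneg (mul_nonneg hx0 (by linarith)) h1.le
      linarith
    calc (1:ℝ) ≤ (1 - x) * (1 + y) := key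
    _ ≤ (1 - x) * Real.exp y := by
        apply mul_le_mul_of_nonneg_left (by linarith) (by nlinarith : (0:ℝ) ≤ 1 - x)
  rw [Real.exp_neg]
  have he : (0:ℝ) < Real.exp y := Real.exp_pos y
  rw [inv_le_iff_one_le_mul₀ he]
  linarith [h3]

end SnAux
-- continuation: Pp bounds
namespace SnAux
variable {q : ℂ}

lemma abs_Pp (a N : ℕ) :
    Complex.abs (Pp q a N) = ∏ i ∈ Finset.range N, Complex.abs (1 - q ^ (i + a)) := by
  rw [Pp, map_prod]

lemma abs_Pp_le (hq1 : Complex.abs q < 1) {a : ℕ} (ha : 1 ≤ a) (N : ℕ) :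
    Complex.abs (Pp q a N) ≤ Mu q := by
  set ρ := Complex.abs q with hρ
  have hρ0 : 0 ≤ ρ := Complex.abs.nonneg q
  rw [abs_Pp]
  calc ∏ i ∈ Finset.range N, Complex.abs (1 - q ^ (i + a))
      ≤ ∏ i ∈ Finset.range N, Real.exp (ρ ^ (i + a)) := by
        apply Finset.prod_le_prod (fun i _ => Complex.abs.nonneg _)
        intro i _
        calc Complex.abs (1 - q ^ (i + a)) ≤ 1 + ρ ^ (i + a) := abs_factor_le _
        _ ≤ Real.exp (ρ ^ (i + a)) := by
            have := Real.add_one_le_exp (ρ ^ (i + a)); linarith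
  _ = Real.exp (∑ i ∈ Finset.range N, ρ ^ (i + a)) := (Real.exp_sum _ _).symm
  _ ≤ Mu q := by
      rw [Mu]
      apply Real.exp_le_exp.mpr
      calc ∑ i ∈ Finset.range N, ρ ^ (i + a) ≤ ρ ^ a / (1 - ρ) := sum_rho_le hq1 a N
      _ ≤ ρ / (1 - ρ) := by
          have h1 : (0:ℝ) < 1 - ρ := by linarith
          gcongr
          exact rho_pow_le hq1 ha

lemma abs_Pp_ge (hq1 : Complex.abs q < 1) {a : ℕ} (ha : 1 ≤ a) (N : ℕ) :
    cI q ≤ Complex.abs (Pp q a N) := by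
  set ρ := Complex.abs q with hρ
  have hρ0 : 0 ≤ ρ := Complex.abs.nonneg q
  have h1 : (0:ℝ) < 1 - ρ := by linarith
  rw [abs_Pp]
  calc cI q ≤ Real.exp (-(∑ i ∈ Finset.range N, ρ ^ (i + a)) / (1 - ρ)) := by
        rw [cI]
        apply Real.exp_le_exp.mpr
        rw [neg_div]
        apply neg_le_neg
        rw [div_le_div_iff₀ h1 (by positivity : (0:ℝ) < (1-ρ)^2)]
        calc (∑ i ∈ Finset.range N, ρ ^ (i + a)) * (1 - ρ) ^ 2
            ≤ (ρ ^ a / (1 - ρ)) * (1 - ρ) ^ 2 := by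
              apply mul_le_mul_of_nonneg_right (sum_rho_le hq1 a N) (by positivity)
        _ = ρ ^ a * (1 - ρ) := by field_simp
        _ ≤ ρ * (1 - ρ) := by
              apply mul_le_mul_of_nonneg_right (rho_pow_le hq1 ha) h1.le
  _ = ∏ i ∈ Finset.range N, Real.exp (-(ρ ^ (i + a) / (1 - ρ))) := by
        rw [← Real.exp_sum]
        congr 1
        rw [neg_div, Finset.sum_div, ← Finset.sum_neg_distrib]
  _ ≤ ∏ i ∈ Finset.range N, Complex.abs (1 - q ^ (i + a)) := by
        apply Finset.prod_le_prod (fun i _ => (Real.exp_pos _).le)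
        intro i _
        calc Real.exp (-(ρ ^ (i + a) / (1 - ρ))) ≤ 1 - ρ ^ (i + a) :=
              exp_neg_le_one_sub hq1 (pow_nonneg hρ0 _) (rho_pow_le hq1 (by omega))
        _ ≤ Complex.abs (1 - q ^ (i + a)) := abs_factor_ge _

lemma Pp_pos (hq1 : Complex.abs q < 1) {a : ℕ} (ha : 1 ≤ a) (N : ℕ) :
    0 < Complex.abs (Pp q a N) := lt_of_lt_of_le (Real.exp_pos _) (abs_Pp_ge hq1 ha N)

lemma Pp_ne_zero (hq1 : Complex.abs q < 1) {a : ℕ} (ha : 1 ≤ a) (N : ℕ) :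
    Pp q a N ≠ 0 := by
  have := Pp_pos hq1 ha N
  intro h; rw [h] at this; simp at this

lemma cI_pos : 0 < cI q := Real.exp_pos _
lemma Mu_pos : 0 < Mu q := Real.exp_pos _
lemma cI_le_one : cI q ≤ 1 := by
  rw [cI]
  apply Real.exp_le_one_iff.mpr
  rw [neg_nonpos]
  positivity
lemma one_le_Mu (hq1 : Complex.abs q < 1) : 1 ≤ Mu q := by
  rw [Mu]
  have : 0 ≤ Complex.abs q / (1 - Complex.abs q) :=
    div_nonneg (Complex.abs.nonneg q) (by linarith)
  calc (1:ℝ) = Real.exp 0 := Real.exp_zero.symm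
  _ ≤ _ := Real.exp_le_exp.mpr this

end SnAux
-- continuation: near-one estimates and splitting
namespace SnAux
variable {q : ℂ}

lemma abs_prod_one_add_sub_one (z : ℕ → ℂ) (N : ℕ) :
    Complex.abs (∏ i ∈ Finset.range N, (1 + z i) - 1)
      ≤ Real.exp (∑ i ∈ Finset.range N, Complex.abs (z i)) - 1 := by
  induction N with
  | zero => simp
  | succ N ih =>
    rw [Finset.prod_range_succ, Finset.sum_range_succ]
    set P := ∏ i ∈ Finset.range N, (1 + z i)
    set S := ∑ i ∈ Finset.range N, Complex.abs (z i)
    have hS0 : 0 ≤ S := Finset.sum_nonneg fun i _ => Complex.abs.nonneg _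
    have h1 : P * (1 + z N) - 1 = (P - 1) * (1 + z N) + z N := by ring
    rw [h1]
    have h2 : Complex.abs ((P - 1) * (1 + z N) + z N)
        ≤ Complex.abs (P - 1) * (1 + Complex.abs (z N)) + Complex.abs (z N) := by
      calc Complex.abs ((P - 1) * (1 + z N) + z N)
          ≤ Complex.abs ((P - 1) * (1 + z N)) + Complex.abs (z N) := Complex.abs.add_le _ _
      _ ≤ Complex.abs (P - 1) * (1 + Complex.abs (z N)) + Complex.abs (z N) := by
          rw [map_mul]
          have : Complex.abs (1 + z N) ≤ 1 + Complex.abs (z N) := by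
            have := norm_add_le (1 : ℂ) (z N); simpa [Complex.norm_eq_abs] using this
          have := mul_le_mul_of_nonneg_left this (Complex.abs.nonneg (P - 1))
          linarith
    have h3 : 1 + Complex.abs (z N) ≤ Real.exp (Complex.abs (z N)) := by
      have := Real.add_one_le_exp (Complex.abs (z N)); linarith
    have h4 : Complex.abs (P - 1) * (1 + Complex.abs (z N))
        ≤ (Real.exp S - 1) * Real.exp (Complex.abs (z N)) := by
      apply mul_le_mul ih h3 (by positivity) (by
        have := Real.one_le_exp hS0; linarith)
    have h5 : Complex.abs (z N) ≤ Real.exp (Complex.abs (z N)) - 1 := by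
      have := Real.add_one_le_exp (Complex.abs (z N)); linarith
    calc Complex.abs ((P - 1) * (1 + z N) + z N)
        ≤ (Real.exp S - 1) * Real.exp (Complex.abs (z N)) + (Real.exp (Complex.abs (z N)) - 1) := by
          linarith
    _ = Real.exp (S + Complex.abs (z N)) - 1 := by rw [Real.exp_add]; ring

lemma abs_Pp_sub_one (hq1 : Complex.abs q < 1) (a N : ℕ) :
    Complex.abs (Pp q a N - 1) ≤ Real.exp (Complex.abs q ^ a / (1 - Complex.abs q)) - 1 := by
  have h0 : Pp q a N = ∏ i ∈ Finset.range N, (1 + (-(q ^ (i + a)))) := by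
    rw [Pp]; exact Finset.prod_congr rfl fun i _ => by ring
  rw [h0]
  calc Complex.abs (∏ i ∈ Finset.range N, (1 + (-(q ^ (i + a)))) - 1)
      ≤ Real.exp (∑ i ∈ Finset.range N, Complex.abs (-(q ^ (i + a)))) - 1 :=
        abs_prod_one_add_sub_one _ N
  _ ≤ Real.exp (Complex.abs q ^ a / (1 - Complex.abs q)) - 1 := by
      have : ∑ i ∈ Finset.range N, Complex.abs (-(q ^ (i + a)))
          = ∑ i ∈ Finset.range N, Complex.abs q ^ (i + a) := by
        exact Finset.sum_congr rfl fun i _ => by rw [map_neg_eq_map, map_pow]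
      rw [this]
      have := sum_rho_le hq1 a N
      exact sub_le_sub_right (Real.exp_le_exp.mpr this) 1

lemma Pp_tendsto_one (hq1 : Complex.abs q < 1) {a : ℕ → ℕ} (N : ℕ → ℕ)
    (ha : Filter.Tendsto a Filter.atTop Filter.atTop) :
    Filter.Tendsto (fun n => Pp q (a n) (N n)) Filter.atTop (nhds 1) := by
  have hρ0 : 0 ≤ Complex.abs q := Complex.abs.nonneg q
  rw [tendsto_iff_norm_sub_tendsto_zero]
  refine squeeze_zero_norm (a := fun n => Real.exp (Complex.abs q ^ (a n) / (1 - Complex.abs q)) - 1) (fun n => ?_) ?_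
  · rw [Complex.norm_eq_abs, Real.norm_eq_abs, Complex.abs_abs]
    exact abs_Pp_sub_one hq1 (a n) (N n)
  · have h1 : Filter.Tendsto (fun n => Complex.abs q ^ (a n)) Filter.atTop (nhds 0) :=
      (tendsto_pow_atTop_nhds_zero_of_lt_one hρ0 hq1).comp ha
    have h2 : Filter.Tendsto (fun n => Real.exp (Complex.abs q ^ (a n) / (1 - Complex.abs q)) - 1)
        Filter.atTop (nhds (Real.exp (0 / (1 - Complex.abs q)) - 1)) := by
      apply Filter.Tendsto.sub_const
      apply (Real.continuous_exp.tendsto _).comp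
      exact h1.div_const _
    simpa using h2

lemma Pp_split (j M : ℕ) : Pp q 1 (j + M) = Pp q 1 j * Pp q (j + 1) M := by
  rw [Pp, Pp, Pp, Finset.prod_range_add]
  congr 1
  exact Finset.prod_congr rfl fun i _ => by rw [show j + i + 1 = i + (j + 1) from by omega]

lemma Pp_key_split (j M : ℕ) :
    Pp q 1 j * Pp q (j + 1) M = Pp q 1 M * Pp q (M + 1) j := by
  rw [← Pp_split, ← Pp_split, add_comm]

end SnAux
-- continuation: Wf and uf
namespace SnAux
variable {q : ℂ}

noncomputable def Cc (q : ℂ) (A r n : ℕ) : ℂ :=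
  (Pp q 1 n) ^ (A - 2 * r) * q ^ (-(((A : ℂ) - 2 * r) * (n : ℂ) / 4))

noncomputable def Wf (q : ℂ) (A r E n j : ℕ) : ℂ :=
  Cc q A r n * q ^ (r * n + 1 + j) * q ^ ((r * n + 1 + j) * (E * n)) *
    Pp q (j + 1) (r * n) * Pp q (r * n + 1 + j + (n + 1)) (r * n) /
    (Pp q (r * n + 1 + j) (n + 1)) ^ A

noncomputable def uf (q : ℂ) (A r E n j : ℕ) : ℂ :=
  q ^ (j * (1 + E * n)) * Pp q (r * n + 1) j * Pp q (r * n + 1 + j + (n + 1)) (r * n) *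
      (Pp q (r * n + 1) (n + 1)) ^ A /
    (Pp q 1 j * Pp q (r * n + 1 + (n + 1)) (r * n) * (Pp q (r * n + 1 + j) (n + 1)) ^ A)

lemma Rc_eval (hq0 : q ≠ 0) {A r E : ℕ} (hE : A - 2 * r = 2 * E) (n j : ℕ) :
    q ^ (r * n + 1 + j) * Rc A r n q (q ^ (r * n + 1 + j)) = Wf q A r E n j := by
  set k := r * n + 1 + j with hk
  have e1 : (∏ i ∈ Finset.range (r * n), (1 - q ^ ((i : ℤ) - (r * n : ℤ)) * q ^ k))
      = Pp q (j + 1) (r * n) := by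
    rw [Pp]
    refine Finset.prod_congr rfl fun i _ => ?_
    congr 1
    rw [← zpow_natCast q k, ← zpow_add₀ hq0, ← zpow_natCast q (i + (j + 1))]
    congr 1
    push_cast [hk]
    ring
  have e2 : (∏ i ∈ Finset.range (r * n), (1 - q ^ (n + 1 + i) * q ^ k))
      = Pp q (k + (n + 1)) (r * n) := by
    rw [Pp]
    refine Finset.prod_congr rfl fun i _ => ?_
    congr 1
    rw [← pow_add]
    congr 1
    omega
  have e3 : (∏ i ∈ Finset.range (n + 1), (1 - q ^ i * q ^ k)) = Pp q k (n + 1) := by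
    rw [Pp]
    refine Finset.prod_congr rfl fun i _ => ?_
    congr 1
    rw [← pow_add]
  have e4 : (q ^ k) ^ ((A - 2 * r) * n / 2) = q ^ (k * (E * n)) := by
    rw [← pow_mul]
    congr 1
    rw [hE]
    have h5 : 2 * E * n / 2 = E * n := by
      rw [mul_assoc]
      exact Nat.mul_div_cancel_left _ (by norm_num)
    rw [h5]
  have e0 : (∏ i ∈ Finset.range n, (1 - q ^ (i + 1))) = Pp q 1 n := rfl
  rw [Rc, e0, e1, e2, e3, e4, Wf, Cc]
  ring

lemma Rc_vanish (hq0 : q ≠ 0) {A r n : ℕ} {k : ℕ} (hk1 : 1 ≤ k) (hk : k ≤ r * n) :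
    Rc A r n q (q ^ k) = 0 := by
  have hz : (∏ i ∈ Finset.range (r * n), (1 - q ^ ((i : ℤ) - (r * n : ℤ)) * q ^ k)) = 0 := by
    apply Finset.prod_eq_zero (Finset.mem_range.mpr (show r * n - k < r * n by omega))
    have : q ^ ((↑(r * n - k) : ℤ) - (r * n : ℤ)) * q ^ k = 1 := by
      rw [← zpow_natCast q k, ← zpow_add₀ hq0]
      have : (↑(r * n - k) : ℤ) - (r * n : ℤ) + (k : ℤ) = 0 := by
        push_cast [Nat.cast_sub hk]
        ring
      rw [this, zpow_zero]
    rw [this]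
    ring
  rw [Rc, hz]
  ring

lemma uf_zero (hq1 : Complex.abs q < 1) (A r E n : ℕ) : uf q A r E n 0 = 1 := by
  rw [uf]
  have h1 : Pp q (r * n + 1) 0 = 1 := by rw [Pp]; simp
  have h2 : Pp q 1 0 = 1 := by rw [Pp]; simp
  rw [h1, h2]
  simp only [Nat.zero_mul, pow_zero, add_zero, one_mul, mul_one]
  apply div_self
  apply mul_ne_zero
  · exact Pp_ne_zero hq1 (by omega) _
  · exact pow_ne_zero _ (Pp_ne_zero hq1 (by omega) _)

lemma Wf_eq (hq1 : Complex.abs q < 1) (A r E n : ℕ) (j : ℕ) :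
    Wf q A r E n j = Wf q A r E n 0 * uf q A r E n j := by
  have hQ : Pp q 1 j ≠ 0 := Pp_ne_zero hq1 le_rfl j
  have hG0 : Pp q (r * n + 1 + (n + 1)) (r * n) ≠ 0 := Pp_ne_zero hq1 (by omega) _
  have hD0 : Pp q (r * n + 1) (n + 1) ≠ 0 := Pp_ne_zero hq1 (by omega) _
  have hDj : Pp q (r * n + 1 + j) (n + 1) ≠ 0 := Pp_ne_zero hq1 (by omega) _
  have hsplit : Pp q 1 j * Pp q (j + 1) (r * n) = Pp q 1 (r * n) * Pp q (r * n + 1) j :=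
    Pp_key_split j (r * n)
  rw [Wf, Wf, uf]
  have hp1 : q ^ (r * n + 1 + j) = q ^ (r * n + 1) * q ^ j := by rw [← pow_add]
  have hp2 : q ^ ((r * n + 1 + j) * (E * n))
      = q ^ ((r * n + 1) * (E * n)) * q ^ (j * (E * n)) := by
    rw [← pow_add, ← add_mul]
  have hp3 : q ^ (j * (1 + E * n)) = q ^ j * q ^ (j * (E * n)) := by
    rw [← pow_add]
    congr 1
    ring
  simp only [add_zero, Nat.add_zero]
  rw [hp1, hp2, hp3]
  field_simp
  linear_combination (Cc q A r n * q ^ (r * n + 1) * q ^ j * q ^ ((r * n + 1) * (E * n)) *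
    q ^ (j * (E * n)) * Pp q (r * n + 1 + j + (n + 1)) (r * n)) * hsplit

end SnAux
-- continuation: abs bounds on uf, Euler function
namespace SnAux
variable {q : ℂ}

noncomputable def Kc (q : ℂ) (A : ℕ) : ℝ := Mu q ^ (A + 2) / cI q ^ (A + 2)

lemma Kc_pos (q : ℂ) (A : ℕ) : 0 < Kc q A := by
  rw [Kc]
  exact div_pos (pow_pos Mu_pos _) (pow_pos cI_pos _)

lemma abs_uf_le (hq1 : Complex.abs q < 1) (A r E n j : ℕ) :
    Complex.abs (uf q A r E n j) ≤ Kc q A * Complex.abs q ^ (j * (1 + E * n)) := by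
  set ρ := Complex.abs q with hρ
  have hρ0 : 0 ≤ ρ := Complex.abs.nonneg q
  rw [uf, map_div₀, map_mul, map_mul, map_mul, map_mul, map_mul, map_pow, map_pow, map_pow]
  have hMu1 : 1 ≤ Mu q := one_le_Mu hq1
  have hcpos : 0 < cI q := cI_pos
  have h1 : Complex.abs (Pp q (r * n + 1) j) ≤ Mu q := abs_Pp_le hq1 (by omega) _
  have h2 : Complex.abs (Pp q (r * n + 1 + j + (n + 1)) (r * n)) ≤ Mu q :=
    abs_Pp_le hq1 (by omega) _
  have h3 : Complex.abs (Pp q (r * n + 1) (n + 1)) ≤ Mu q := abs_Pp_le hq1 (by omega) _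
  have h4 : cI q ≤ Complex.abs (Pp q 1 j) := abs_Pp_ge hq1 le_rfl _
  have h5 : cI q ≤ Complex.abs (Pp q (r * n + 1 + (n + 1)) (r * n)) := abs_Pp_ge hq1 (by omega) _
  have h6 : cI q ≤ Complex.abs (Pp q (r * n + 1 + j) (n + 1)) := abs_Pp_ge hq1 (by omega) _
  have hnum_le : ρ ^ (j * (1 + E * n)) * Complex.abs (Pp q (r * n + 1) j) *
      Complex.abs (Pp q (r * n + 1 + j + (n + 1)) (r * n)) *
      Complex.abs (Pp q (r * n + 1) (n + 1)) ^ A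
      ≤ ρ ^ (j * (1 + E * n)) * Mu q ^ (A + 2) := by
    have e1 : (0:ℝ) ≤ ρ ^ (j * (1 + E * n)) := pow_nonneg hρ0 _
    have m0 : (0:ℝ) ≤ Mu q := Mu_pos.le
    have t1 : ρ ^ (j * (1 + E * n)) * Complex.abs (Pp q (r * n + 1) j)
        ≤ ρ ^ (j * (1 + E * n)) * Mu q := mul_le_mul_of_nonneg_left h1 e1
    have t2 := mul_le_mul t1 h2 (Complex.abs.nonneg _) (mul_nonneg e1 m0)
    have t3 := mul_le_mul t2 (pow_le_pow_left₀ (Complex.abs.nonneg _) h3 A)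
      (pow_nonneg (Complex.abs.nonneg _) A) (mul_nonneg (mul_nonneg e1 m0) m0)
    calc _ ≤ ρ ^ (j * (1 + E * n)) * Mu q * Mu q * Mu q ^ A := t3
    _ = ρ ^ (j * (1 + E * n)) * Mu q ^ (A + 2) := by ring
  have hden_ge : cI q ^ (A + 2) ≤ Complex.abs (Pp q 1 j) *
      Complex.abs (Pp q (r * n + 1 + (n + 1)) (r * n)) *
      Complex.abs (Pp q (r * n + 1 + j) (n + 1)) ^ A := by
    have t1 := mul_le_mul h4 h5 hcpos.le (Complex.abs.nonneg _)
    have t2 := mul_le_mul t1 (pow_le_pow_left₀ hcpos.le h6 A) (pow_nonneg hcpos.le A)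
      (mul_nonneg (Complex.abs.nonneg _) (Complex.abs.nonneg _))
    calc cI q ^ (A + 2) = cI q * cI q * cI q ^ A := by ring
    _ ≤ _ := t2
  have hdenpos : (0:ℝ) < cI q ^ (A + 2) := pow_pos hcpos _
  calc _ ≤ (ρ ^ (j * (1 + E * n)) * Mu q ^ (A + 2)) / cI q ^ (A + 2) := by
        apply div_le_div₀ (by positivity) hnum_le hdenpos hden_ge
  _ = Kc q A * ρ ^ (j * (1 + E * n)) := by rw [Kc]; ring

lemma abs_uf_le' (hq1 : Complex.abs q < 1) (A r E n j : ℕ) :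
    Complex.abs (uf q A r E n j) ≤ Kc q A * Complex.abs q ^ j := by
  refine (abs_uf_le hq1 A r E n j).trans ?_
  have : Complex.abs q ^ (j * (1 + E * n)) ≤ Complex.abs q ^ j :=
    pow_le_pow_of_le_one (Complex.abs.nonneg q) hq1.le (by nlinarith [Nat.zero_le (E * n)])
  exact mul_le_mul_of_nonneg_left this (Kc_pos q A).le

lemma summable_uf (hq1 : Complex.abs q < 1) (A r E n : ℕ) :
    Summable (fun j => uf q A r E n j) := by
  apply Summable.of_norm_bounded (g := fun j => Kc q A * Complex.abs q ^ j)
  · exact (summable_geometric_of_lt_one (Complex.abs.nonneg q) hq1).mul_left _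
  · intro j
    rw [Complex.norm_eq_abs]
    exact abs_uf_le' hq1 A r E n j

/-- Euler's function `∑ z^j/(q;q)_j`. -/
noncomputable def Fq (q z : ℂ) : ℂ := ∑' j : ℕ, z ^ j / Pp q 1 j

lemma summable_Fq (hq1 : Complex.abs q < 1) {z : ℂ} (hz : Complex.abs z < 1) :
    Summable (fun j : ℕ => z ^ j / Pp q 1 j) := by
  apply Summable.of_norm_bounded (g := fun j => (cI q)⁻¹ * Complex.abs z ^ j)
  · exact (summable_geometric_of_lt_one (Complex.abs.nonneg z) hz).mul_left _
  · intro j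
    rw [Complex.norm_eq_abs, map_div₀, map_pow]
    rw [div_eq_mul_inv, mul_comm]
    apply mul_le_mul ?_ le_rfl (pow_nonneg (Complex.abs.nonneg z) j) (inv_nonneg.mpr cI_pos.le)
    rw [inv_le_inv₀ (Pp_pos hq1 le_rfl j) cI_pos]
    exact abs_Pp_ge hq1 le_rfl j

lemma Pp_succ (j : ℕ) : Pp q 1 (j + 1) = Pp q 1 j * (1 - q ^ (j + 1)) := by
  rw [Pp, Pp, Finset.prod_range_succ]

lemma Fq_funeq (hq1 : Complex.abs q < 1) {z : ℂ} (hz : Complex.abs z < 1) :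
    Fq q (q * z) = Fq q z * (1 - z) := by
  have hqz : Complex.abs (q * z) < 1 := by
    rw [map_mul]
    calc Complex.abs q * Complex.abs z ≤ 1 * Complex.abs z :=
          mul_le_mul_of_nonneg_right hq1.le (Complex.abs.nonneg z)
    _ = Complex.abs z := one_mul _
    _ < 1 := hz
  set a : ℕ → ℂ := fun j => z ^ j / Pp q 1 j with ha
  set b : ℕ → ℂ := fun j => (q * z) ^ j / Pp q 1 j with hb
  have hSa : Summable a := summable_Fq hq1 hz
  have hSb : Summable b := summable_Fq hq1 hqz
  have key : ∀ j : ℕ, a (j + 1) - b (j + 1) = z * a j := by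
    intro j
    have hPj : Pp q 1 j ≠ 0 := Pp_ne_zero hq1 le_rfl j
    have hf : (1 : ℂ) - q ^ (j + 1) ≠ 0 := factor_ne_zero hq1 (by omega)
    have hPj1 : Pp q 1 (j + 1) = Pp q 1 j * (1 - q ^ (j + 1)) := Pp_succ j
    rw [ha, hb]
    simp only []
    rw [hPj1, mul_pow]
    field_simp
    ring
  have h0 : a 0 - b 0 = 0 := by
    rw [ha, hb]
    simp [Pp]
  have step1 : Fq q z - Fq q (q * z) = ∑' j, (a j - b j) := (Summable.tsum_sub hSa hSb).symm
  have step2 : ∑' j, (a j - b j) = (a 0 - b 0) + ∑' j, (a (j + 1) - b (j + 1)) :=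
    Summable.tsum_eq_zero_add (hSa.sub hSb)
  have step3 : ∑' j, (a (j + 1) - b (j + 1)) = ∑' j, z * a j := by
    exact tsum_congr key
  have step4 : ∑' j, z * a j = z * Fq q z := tsum_mul_left
  have : Fq q z - Fq q (q * z) = z * Fq q z := by
    rw [step1, step2, h0, step3, step4, zero_add]
  linear_combination -this

lemma Fq_sub_one (hq1 : Complex.abs q < 1) {z : ℂ} (hz : Complex.abs z < 1) :
    Complex.abs (Fq q z - 1) ≤ (cI q)⁻¹ * Complex.abs z * (1 - Complex.abs z)⁻¹ := by
  set a : ℕ → ℂ := fun j => z ^ j / Pp q 1 j with ha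
  have hSa : Summable a := summable_Fq hq1 hz
  have h0 : a 0 = 1 := by rw [ha]; simp [Pp]
  have hF : Fq q z = 1 + ∑' j, a (j + 1) := by
    rw [Fq, ← ha, Summable.tsum_eq_zero_add hSa, h0]
  have hnorm : ∀ j : ℕ, ‖a (j + 1)‖ ≤ (cI q)⁻¹ * Complex.abs z ^ (j + 1) := by
    intro j
    rw [ha]
    simp only []
    rw [Complex.norm_eq_abs, map_div₀, map_pow, div_eq_mul_inv, mul_comm]
    apply mul_le_mul ?_ le_rfl (pow_nonneg (Complex.abs.nonneg z) _) (inv_nonneg.mpr cI_pos.le)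
    rw [inv_le_inv₀ (Pp_pos hq1 le_rfl _) cI_pos]
    exact abs_Pp_ge hq1 le_rfl _
  have hSa1 : Summable (fun j => a (j + 1)) := (summable_nat_add_iff 1).mpr hSa
  have hSbound : Summable (fun j : ℕ => (cI q)⁻¹ * Complex.abs z ^ (j + 1)) := by
    have : Summable (fun j : ℕ => Complex.abs z ^ j) :=
      summable_geometric_of_lt_one (Complex.abs.nonneg z) hz
    exact (((summable_nat_add_iff 1).mpr this).mul_left _)
  calc Complex.abs (Fq q z - 1) = ‖∑' j, a (j + 1)‖ := by
        rw [hF, ← Complex.norm_eq_abs]; congr 1; ring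
  _ ≤ ∑' j, ‖a (j + 1)‖ := norm_tsum_le_tsum_norm hSa1.norm
  _ ≤ ∑' j : ℕ, (cI q)⁻¹ * Complex.abs z ^ (j + 1) := Summable.tsum_le_tsum hnorm hSa1.norm hSbound
  _ = (cI q)⁻¹ * Complex.abs z * (1 - Complex.abs z)⁻¹ := by
      have : ∀ j : ℕ, (cI q)⁻¹ * Complex.abs z ^ (j + 1)
          = ((cI q)⁻¹ * Complex.abs z) * Complex.abs z ^ j := by
        intro j; rw [pow_succ]; ring
      rw [tsum_congr this, tsum_mul_left, tsum_geometric_of_lt_one (Complex.abs.nonneg z) hz]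

lemma Fq_q_ne_zero (hq0 : q ≠ 0) (hq1 : Complex.abs q < 1) : Fq q q ≠ 0 := by
  intro hzero
  set ρ := Complex.abs q with hρ
  have hρ0 : 0 ≤ ρ := Complex.abs.nonneg q
  have habs : ∀ s : ℕ, 1 ≤ s → Complex.abs (q ^ s) < 1 := by
    intro s hs
    rw [map_pow]
    exact lt_of_le_of_lt (rho_pow_le hq1 hs) hq1
  have hallzero : ∀ s : ℕ, 1 ≤ s → Fq q (q ^ s) = 0 := by
    intro s hs
    induction s with
    | zero => omega
    | succ s ih =>
      rcases Nat.eq_or_lt_of_le hs with h | h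
      · rw [← h, pow_one] at *
        simpa using hzero
      · have hs1 : 1 ≤ s := by omega
        have : Fq q (q ^ (s + 1)) = Fq q (q ^ s) * (1 - q ^ s) := by
          rw [pow_succ, mul_comm (q ^ s) q]
          exact Fq_funeq hq1 (habs s hs1)
        rw [this, ih hs1, zero_mul]
  have htend : Filter.Tendsto (fun s : ℕ => (cI q)⁻¹ * ρ ^ s * (1 - ρ ^ s)⁻¹)
      Filter.atTop (nhds 0) := by
    have h1 : Filter.Tendsto (fun s : ℕ => ρ ^ s) Filter.atTop (nhds 0) :=
      tendsto_pow_atTop_nhds_zero_of_lt_one hρ0 hq1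
    have h2 : Filter.Tendsto (fun s : ℕ => (cI q)⁻¹ * ρ ^ s) Filter.atTop (nhds 0) := by
      simpa using h1.const_mul (cI q)⁻¹
    have h3 : Filter.Tendsto (fun s : ℕ => (1 - ρ ^ s)⁻¹) Filter.atTop (nhds 1) := by
      have : Filter.Tendsto (fun s : ℕ => 1 - ρ ^ s) Filter.atTop (nhds 1) := by
        simpa using (tendsto_const_nhds.sub h1 :
          Filter.Tendsto (fun s : ℕ => (1:ℝ) - ρ ^ s) Filter.atTop (nhds (1 - 0)))
      simpa using this.inv₀ (by norm_num)
    simpa using h2.mul h3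
  have hev : ∀ᶠ s : ℕ in Filter.atTop, (cI q)⁻¹ * ρ ^ s * (1 - ρ ^ s)⁻¹ < 1 := by
    have := htend.eventually_lt_const (show (0:ℝ) < 1 by norm_num)
    exact this
  obtain ⟨s, hs1, hs2⟩ := (hev.and (Filter.eventually_ge_atTop 1)).exists
  have h4 := Fq_sub_one hq1 (habs s hs2)
  rw [hallzero s hs2] at h4
  rw [map_pow] at h4
  simp only [zero_sub, map_neg_eq_map, map_one] at h4
  linarith
end SnAux
-- continuation: asymptotics of Wf n 0
namespace SnAux
variable {q : ℂ}

lemma Cc_abs (hq0 : q ≠ 0) {A r : ℕ} (hr2 : 2 * r ≤ A) (n : ℕ) :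
    Complex.abs (Cc q A r n) = Complex.abs (Pp q 1 n) ^ (A - 2 * r) *
      Complex.abs q ^ (-(((A - 2 * r : ℕ) : ℝ) * n / 4)) := by
  rw [Cc, map_mul, map_pow]
  congr 1
  have hcast : (-(((A : ℂ) - 2 * r) * (n : ℂ) / 4))
      = ((-(((A - 2 * r : ℕ) : ℝ) * (n : ℝ) / 4) : ℝ) : ℂ) := by
    push_cast [Nat.cast_sub hr2]
    ring
  rw [hcast, Complex.abs_cpow_real]

lemma Cc_ne_zero (hq0 : q ≠ 0) (hq1 : Complex.abs q < 1) {A r : ℕ} (hr2 : 2 * r ≤ A) (n : ℕ) :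
    Cc q A r n ≠ 0 := by
  intro h
  have h2 : Complex.abs (Cc q A r n) = 0 := by rw [h]; simp
  rw [Cc_abs hq0 hr2 n] at h2
  have hρ : 0 < Complex.abs q := Complex.abs.pos hq0
  have p1 : 0 < Complex.abs (Pp q 1 n) := Pp_pos hq1 le_rfl n
  have : 0 < Complex.abs (Pp q 1 n) ^ (A - 2 * r) *
      Complex.abs q ^ (-(((A - 2 * r : ℕ) : ℝ) * n / 4)) :=
    mul_pos (pow_pos p1 _) (Real.rpow_pos_of_pos hρ _)
  linarith

lemma Wf0_ne_zero (hq0 : q ≠ 0) (hq1 : Complex.abs q < 1) {A r E : ℕ} (hr2 : 2 * r ≤ A)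
    (n : ℕ) : Wf q A r E n 0 ≠ 0 := by
  rw [Wf]
  exact div_ne_zero
    (mul_ne_zero (mul_ne_zero (mul_ne_zero (mul_ne_zero (Cc_ne_zero hq0 hq1 hr2 n)
      (pow_ne_zero _ hq0)) (pow_ne_zero _ hq0)) (Pp_ne_zero hq1 (by omega) _))
      (Pp_ne_zero hq1 (by omega) _))
    (pow_ne_zero _ (Pp_ne_zero hq1 (by omega) _))

lemma abs_Wf0 (A r E n : ℕ) :
    Complex.abs (Wf q A r E n 0) = Complex.abs (Cc q A r n) *
      Complex.abs q ^ (r * n + 1) * Complex.abs q ^ ((r * n + 1) * (E * n)) *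
      Complex.abs (Pp q 1 (r * n)) * Complex.abs (Pp q (r * n + 1 + (n + 1)) (r * n)) /
      Complex.abs (Pp q (r * n + 1) (n + 1)) ^ A := by
  rw [Wf]
  simp only [add_zero, zero_add, map_div₀, map_mul, map_pow]

lemma log_helper {x0 x1 x2 x3 x4 x5 : ℝ} (h0 : 0 < x0) (h1 : 0 < x1) (h2 : 0 < x2)
    (h3 : 0 < x3) (h4 : 0 < x4) (h5 : 0 < x5) (A : ℕ) :
    Real.log (x0 * x1 * x2 * x3 * x4 / x5 ^ A) = Real.log x0 + Real.log x1 + Real.log x2 +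
      Real.log x3 + Real.log x4 - (A : ℝ) * Real.log x5 := by
  rw [Real.log_div (by positivity : (0:ℝ) < x0 * x1 * x2 * x3 * x4).ne'
      (pow_pos h5 A).ne',
    Real.log_mul (by positivity : (0:ℝ) < x0 * x1 * x2 * x3).ne' h4.ne',
    Real.log_mul (by positivity : (0:ℝ) < x0 * x1 * x2).ne' h3.ne',
    Real.log_mul (by positivity : (0:ℝ) < x0 * x1).ne' h2.ne',
    Real.log_mul h0.ne' h1.ne',
    Real.log_pow]

lemma log_abs_Wf0 (hq0 : q ≠ 0) (hq1 : Complex.abs q < 1) {A r E : ℕ} (hr2 : 2 * r ≤ A)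
    (n : ℕ) :
    Real.log (Complex.abs (Wf q A r E n 0)) =
      (((r * n + 1 : ℕ) : ℝ) + (((r * n + 1) * (E * n) : ℕ) : ℝ)
          - ((A - 2 * r : ℕ) : ℝ) * n / 4) * Real.log (Complex.abs q)
      + (((A - 2 * r : ℕ) : ℝ) * Real.log (Complex.abs (Pp q 1 n))
        + Real.log (Complex.abs (Pp q 1 (r * n)))
        + Real.log (Complex.abs (Pp q (r * n + 1 + (n + 1)) (r * n)))
        - (A : ℝ) * Real.log (Complex.abs (Pp q (r * n + 1) (n + 1)))) := by
  have hρ : 0 < Complex.abs q := Complex.abs.pos hq0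
  have p0 : 0 < Complex.abs (Cc q A r n) := by
    have := Cc_ne_zero hq0 hq1 hr2 n
    exact Complex.abs.pos this
  have p1 : 0 < Complex.abs q ^ (r * n + 1) := pow_pos hρ _
  have p2 : 0 < Complex.abs q ^ ((r * n + 1) * (E * n)) := pow_pos hρ _
  have p3 : 0 < Complex.abs (Pp q 1 (r * n)) := Pp_pos hq1 le_rfl _
  have p4 : 0 < Complex.abs (Pp q (r * n + 1 + (n + 1)) (r * n)) := Pp_pos hq1 (by omega) _
  have p5 : 0 < Complex.abs (Pp q (r * n + 1) (n + 1)) := Pp_pos hq1 (by omega) _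
  rw [abs_Wf0, log_helper p0 p1 p2 p3 p4 p5]
  have lC : Real.log (Complex.abs (Cc q A r n)) =
      ((A - 2 * r : ℕ) : ℝ) * Real.log (Complex.abs (Pp q 1 n))
        + (-(((A - 2 * r : ℕ) : ℝ) * n / 4)) * Real.log (Complex.abs q) := by
    have p6 : 0 < Complex.abs (Pp q 1 n) := Pp_pos hq1 le_rfl n
    rw [Cc_abs hq0 hr2, Real.log_mul (pow_pos p6 _).ne' (Real.rpow_pos_of_pos hρ _).ne',
      Real.log_pow, Real.log_rpow hρ]
  rw [lC, Real.log_pow, Real.log_pow]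
  push_cast
  ring

lemma one_div_sq_tendsto : Filter.Tendsto (fun n : ℕ => 1 / (n : ℝ) ^ 2)
    Filter.atTop (nhds 0) := by
  have h := tendsto_one_div_atTop_nhds_zero_nat (𝕜 := ℝ)
  have h2 := h.mul h
  rw [mul_zero] at h2
  exact h2.congr (fun n => by rw [div_mul_div_comm, one_mul, sq])

lemma tendsto_log_W0 (hq0 : q ≠ 0) (hq1 : Complex.abs q < 1) {A r E : ℕ}
    (hr2 : 2 * r ≤ A) :
    Filter.Tendsto (fun n : ℕ => (1 / (n : ℝ) ^ 2) *
      Real.log (Complex.abs (Wf q A r E n 0))) Filter.atTop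
      (nhds (((r : ℝ) * E) * Real.log (Complex.abs q))) := by
  set ρ := Complex.abs q with hρdef
  set Λ : ℝ := max |Real.log (cI q)| |Real.log (Mu q)| with hΛ
  have hΛ0 : 0 ≤ Λ := le_trans (abs_nonneg _) (le_max_left _ _)
  have hlogbd : ∀ a N : ℕ, 1 ≤ a → |Real.log (Complex.abs (Pp q a N))| ≤ Λ := by
    intro a N ha
    rw [abs_le]
    constructor
    · calc -Λ ≤ -|Real.log (cI q)| := by
            apply neg_le_neg (le_max_left _ _)
      _ ≤ Real.log (cI q) := neg_abs_le _
      _ ≤ Real.log (Complex.abs (Pp q a N)) :=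
            Real.log_le_log cI_pos (abs_Pp_ge hq1 ha N)
    · calc Real.log (Complex.abs (Pp q a N)) ≤ Real.log (Mu q) :=
            Real.log_le_log (Pp_pos hq1 ha N) (abs_Pp_le hq1 ha N)
      _ ≤ |Real.log (Mu q)| := le_abs_self _
      _ ≤ Λ := le_max_right _ _
  -- error term
  set errf : ℕ → ℝ := fun n =>
    ((A - 2 * r : ℕ) : ℝ) * Real.log (Complex.abs (Pp q 1 n))
      + Real.log (Complex.abs (Pp q 1 (r * n)))
      + Real.log (Complex.abs (Pp q (r * n + 1 + (n + 1)) (r * n)))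
      - (A : ℝ) * Real.log (Complex.abs (Pp q (r * n + 1) (n + 1))) with herrf
  have herrbd : ∀ n, |errf n| ≤ (2 * (A : ℝ) + 2) * Λ := by
    intro n
    have b1 := hlogbd 1 n le_rfl
    have b2 := hlogbd 1 (r * n) le_rfl
    have b3 := hlogbd (r * n + 1 + (n + 1)) (r * n) (by omega)
    have b4 := hlogbd (r * n + 1) (n + 1) (by omega)
    have hm : ((A - 2 * r : ℕ) : ℝ) ≤ (A : ℝ) := by
      have : (A - 2 * r : ℕ) ≤ A := Nat.sub_le _ _
      exact_mod_cast this
    have hA0 : (0 : ℝ) ≤ (A : ℝ) := Nat.cast_nonneg _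
    set x1 := ((A - 2 * r : ℕ) : ℝ) * Real.log (Complex.abs (Pp q 1 n)) with hx1
    set x2 := Real.log (Complex.abs (Pp q 1 (r * n))) with hx2
    set x3 := Real.log (Complex.abs (Pp q (r * n + 1 + (n + 1)) (r * n))) with hx3
    set x4 := (A : ℝ) * Real.log (Complex.abs (Pp q (r * n + 1) (n + 1))) with hx4
    have c1 : |x1| ≤ (A : ℝ) * Λ := by
      rw [hx1, abs_mul, Nat.abs_cast]
      exact mul_le_mul hm b1 (abs_nonneg _) hA0
    have c4 : |x4| ≤ (A : ℝ) * Λ := by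
      rw [hx4, abs_mul, Nat.abs_cast]
      exact mul_le_mul_of_nonneg_left b4 hA0
    have habs : |errf n| = |x1 + x2 + x3 - x4| := rfl
    rw [habs]
    have t0 := abs_sub (x1 + x2 + x3) x4
    have t1 := abs_add_le (x1 + x2) x3
    have t2 := abs_add_le x1 x2
    have h2Λ : |x2| ≤ Λ := b2
    have h3Λ : |x3| ≤ Λ := b3
    nlinarith [t0, t1, t2, c1, c4, h2Λ, h3Λ]
  -- main split
  have hmain : ∀ n : ℕ, (1 / (n : ℝ) ^ 2) * Real.log (Complex.abs (Wf q A r E n 0)) =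
      ((((r * n + 1 : ℕ) : ℝ) + (((r * n + 1) * (E * n) : ℕ) : ℝ)
        - ((A - 2 * r : ℕ) : ℝ) * n / 4) / (n : ℝ) ^ 2) * Real.log ρ
      + (1 / (n : ℝ) ^ 2) * errf n := by
    intro n
    rw [log_abs_Wf0 hq0 hq1 hr2 n]
    rw [herrf]
    ring
  rw [show (((r : ℝ) * E) * Real.log ρ) = ((r : ℝ) * E) * Real.log ρ + 0 by ring]
  refine Filter.Tendsto.congr (fun n => (hmain n).symm) (Filter.Tendsto.add ?_ ?_)
  · -- polynomial part
    apply Filter.Tendsto.mul_const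
    have heq : ∀ᶠ n : ℕ in Filter.atTop,
        (r : ℝ) * E + ((r : ℝ) + E - ((A - 2 * r : ℕ) : ℝ) / 4) * (1 / n) + (1 / n) ^ 2 =
        ((((r * n + 1 : ℕ) : ℝ) + (((r * n + 1) * (E * n) : ℕ) : ℝ)
          - ((A - 2 * r : ℕ) : ℝ) * n / 4) / (n : ℝ) ^ 2) := by
      filter_upwards [Filter.eventually_ge_atTop 1] with n hn
      have hn0 : (n : ℝ) ≠ 0 := by
        have : (1 : ℝ) ≤ (n : ℝ) := by exact_mod_cast hn
        linarith
      field_simp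
      push_cast
      ring
    have hbase : Filter.Tendsto (fun n : ℕ =>
        (r : ℝ) * E + ((r : ℝ) + E - ((A - 2 * r : ℕ) : ℝ) / 4) * (1 / n) + (1 / n) ^ 2)
        Filter.atTop (nhds ((r : ℝ) * E)) := by
      have h1 := tendsto_one_div_atTop_nhds_zero_nat (𝕜 := ℝ)
      have h2 : Filter.Tendsto (fun n : ℕ => (1 / (n:ℝ)) ^ 2) Filter.atTop (nhds 0) := by
        have := h1.pow 2
        simpa using this
      have h3 := ((tendsto_const_nhds (x := (r : ℝ) * E)).add
        ((h1.const_mul ((r : ℝ) + E - ((A - 2 * r : ℕ) : ℝ) / 4)).add h2))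
      rw [show ((r : ℝ) * E) + (((r : ℝ) + E - ((A - 2 * r : ℕ) : ℝ) / 4) * 0 + 0) =
        (r : ℝ) * E by ring] at h3
      exact h3.congr (fun n => by ring)
    exact hbase.congr' heq
  · -- error part
    refine squeeze_zero_norm (f := fun n : ℕ => 1 / (n : ℝ) ^ 2 * errf n)
      (a := fun n => (2 * (A : ℝ) + 2) * Λ * (1 / (n : ℝ) ^ 2)) (fun n => ?_) ?_
    · rw [Real.norm_eq_abs, abs_mul]
      have h1 : |1 / (n : ℝ) ^ 2| = 1 / (n : ℝ) ^ 2 := abs_of_nonneg (by positivity)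
      rw [h1]
      calc 1 / (n : ℝ) ^ 2 * |errf n| ≤ 1 / (n : ℝ) ^ 2 * ((2 * (A : ℝ) + 2) * Λ) :=
            mul_le_mul_of_nonneg_left (herrbd n) (by positivity)
      _ = (2 * (A : ℝ) + 2) * Λ * (1 / (n : ℝ) ^ 2) := by ring
    · have := one_div_sq_tendsto.const_mul ((2 * (A : ℝ) + 2) * Λ)
      simpa using this

end SnAux
-- continuation: limit of T_n and main theorem
namespace SnAux
variable {q : ℂ}

lemma tendsto_T (hq0 : q ≠ 0) (hq1 : Complex.abs q < 1) {A r E : ℕ} (hr : 1 ≤ r) :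
    ∃ L : ℂ, L ≠ 0 ∧ Filter.Tendsto (fun n : ℕ => ∑' j : ℕ, uf q A r E n j)
      Filter.atTop (nhds L) := by
  set ρ := Complex.abs q with hρdef
  have hρ0 : 0 ≤ ρ := Complex.abs.nonneg q
  have hbound : ∀ᶠ n : ℕ in Filter.atTop, ∀ j : ℕ, ‖uf q A r E n j‖ ≤ Kc q A * ρ ^ j :=
    Filter.Eventually.of_forall fun n j => by
      rw [Complex.norm_eq_abs]; exact abs_uf_le' hq1 A r E n j
  have hsumb : Summable (fun j : ℕ => Kc q A * ρ ^ j) :=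
    (summable_geometric_of_lt_one hρ0 hq1).mul_left _
  rcases Nat.eq_zero_or_pos E with hE0 | hE1
  · -- E = 0 : limit is Euler's function at q
    subst hE0
    refine ⟨Fq q q, Fq_q_ne_zero hq0 hq1, ?_⟩
    have hab : ∀ j : ℕ, Filter.Tendsto (fun n : ℕ => uf q A r 0 n j) Filter.atTop
        (nhds (q ^ j / Pp q 1 j)) := by
      intro j
      have hrn : Filter.Tendsto (fun n : ℕ => r * n + 1) Filter.atTop Filter.atTop := by
        apply Filter.tendsto_atTop_mono (fun n => ?_) Filter.tendsto_id
        have : n ≤ r * n := Nat.le_mul_of_pos_left n (by omega)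
        simp only [id_eq]
        omega
      have hrn2 : Filter.Tendsto (fun n : ℕ => r * n + 1 + j + (n + 1))
          Filter.atTop Filter.atTop := by
        apply Filter.tendsto_atTop_mono (fun n => ?_) Filter.tendsto_id
        simp only [id_eq]
        omega
      have hrn3 : Filter.Tendsto (fun n : ℕ => r * n + 1 + (n + 1))
          Filter.atTop Filter.atTop := by
        apply Filter.tendsto_atTop_mono (fun n => ?_) Filter.tendsto_id
        simp only [id_eq]
        omega
      have hrn4 : Filter.Tendsto (fun n : ℕ => r * n + 1 + j) Filter.atTop Filter.atTop := by
        apply Filter.tendsto_atTop_mono (fun n => ?_) Filter.tendsto_id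
        have : n ≤ r * n := Nat.le_mul_of_pos_left n (by omega)
        simp only [id_eq]
        omega
      have t1 : Filter.Tendsto (fun n : ℕ => Pp q (r * n + 1) j) Filter.atTop (nhds 1) :=
        Pp_tendsto_one hq1 _ hrn
      have t2 : Filter.Tendsto (fun n : ℕ => Pp q (r * n + 1 + j + (n + 1)) (r * n))
          Filter.atTop (nhds 1) := Pp_tendsto_one hq1 _ hrn2
      have t3 : Filter.Tendsto (fun n : ℕ => (Pp q (r * n + 1) (n + 1)) ^ A)
          Filter.atTop (nhds 1) := by
        have := (Pp_tendsto_one hq1 (fun n => n + 1) hrn).pow A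
        simpa using this
      have t4 : Filter.Tendsto (fun n : ℕ => Pp q (r * n + 1 + (n + 1)) (r * n))
          Filter.atTop (nhds 1) := Pp_tendsto_one hq1 _ hrn3
      have t5 : Filter.Tendsto (fun n : ℕ => (Pp q (r * n + 1 + j) (n + 1)) ^ A)
          Filter.atTop (nhds 1) := by
        have := (Pp_tendsto_one hq1 (fun n => n + 1) hrn4).pow A
        simpa using this
      have hnum : Filter.Tendsto (fun n : ℕ => q ^ (j * (1 + 0 * n)) *
          Pp q (r * n + 1) j * Pp q (r * n + 1 + j + (n + 1)) (r * n) *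
          (Pp q (r * n + 1) (n + 1)) ^ A) Filter.atTop (nhds (q ^ j)) := by
        have key := ((tendsto_const_nhds (x := q ^ j)).mul t1).mul t2 |>.mul t3
        rw [show (q ^ j * 1 * 1 * 1 : ℂ) = q ^ j by ring] at key
        exact key.congr (fun n => by rw [show j * (1 + 0 * n) = j by ring])
      have hden : Filter.Tendsto (fun n : ℕ => Pp q 1 j *
          Pp q (r * n + 1 + (n + 1)) (r * n) * (Pp q (r * n + 1 + j) (n + 1)) ^ A)
          Filter.atTop (nhds (Pp q 1 j)) := by
        have := ((tendsto_const_nhds (x := Pp q 1 j)).mul t4).mul t5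
        simpa using this
      have hPj : Pp q 1 j ≠ 0 := Pp_ne_zero hq1 le_rfl j
      have := hnum.div hden hPj
      exact this.congr (fun n => by simp only [Pi.div_apply, uf])
    have := tendsto_tsum_of_dominated_convergence hsumb hab hbound
    exact this
  · -- E ≥ 1 : limit is 1
    refine ⟨1, one_ne_zero, ?_⟩
    have hab : ∀ j : ℕ, Filter.Tendsto (fun n : ℕ => uf q A r E n j) Filter.atTop
        (nhds (if j = 0 then 1 else 0)) := by
      intro j
      rcases Nat.eq_zero_or_pos j with hj0 | hj1
      · subst hj0
        simp only [if_pos rfl]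
        exact Filter.Tendsto.congr (fun n => (uf_zero hq1 A r E n).symm) tendsto_const_nhds
      · rw [if_neg (by omega)]
        rw [tendsto_iff_norm_sub_tendsto_zero]
        refine squeeze_zero_norm (a := fun n : ℕ => Kc q A * ρ ^ n) (fun n => ?_) ?_
        · rw [norm_norm, Complex.norm_eq_abs, sub_zero]
          refine (abs_uf_le hq1 A r E n j).trans ?_
          apply mul_le_mul_of_nonneg_left ?_ (Kc_pos q A).le
          apply pow_le_pow_of_le_one hρ0 hq1.le
          have h1 : n ≤ E * n := Nat.le_mul_of_pos_left n (by omega)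
          have h2 : 1 + E * n ≤ j * (1 + E * n) := Nat.le_mul_of_pos_left _ (by omega)
          omega
        · have := (tendsto_pow_atTop_nhds_zero_of_lt_one hρ0 hq1).const_mul (Kc q A)
          simpa using this
    have := tendsto_tsum_of_dominated_convergence hsumb hab hbound
    have hval : (∑' j : ℕ, if j = 0 then (1:ℂ) else 0) = 1 := tsum_ite_eq 0 1
    rwa [hval] at this

end SnAux

/-- For `0 < |q| < 1`, `A` even, `1 ≤ r ≤ A/2` and `A ≥ r/2`,
`lim_{n→∞} (1/n²) log |S_n(q)| = -(1/2) r (A-2r) log |1/q|`, where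
`S_n(q) = ∑_{k≥1} q^k R_n(q^k;q)`. -/
theorem Sn_asymptotics (q : ℂ) (hq0 : q ≠ 0) (hq1 : ‖q‖ < 1)
    (A r : ℕ) (hA : Even A) (hr : 1 ≤ r) (hr2 : 2 * r ≤ A) (hAr : r ≤ 2 * A) :
    Filter.Tendsto
      (fun n : ℕ =>
        (1 / (n : ℝ) ^ 2) *
          Real.log ‖∑' k : ℕ, q ^ (k + 1) * Rc A r n q (q ^ (k + 1))‖)
      Filter.atTop
      (nhds (-(1 / 2) * r * ((A : ℝ) - 2 * r) * Real.log (1 / ‖q‖))) := by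
  rw [Complex.norm_eq_abs] at hq1
  simp only [Complex.norm_eq_abs]
  classical
  obtain ⟨c, hc⟩ := hA
  set E : ℕ := A / 2 - r with hEdef
  have hE : A - 2 * r = 2 * E := by omega
  set ρ : ℝ := Complex.abs q with hρdef
  have hρpos : 0 < ρ := Complex.abs.pos hq0
  obtain ⟨L, hL0, hTL⟩ := SnAux.tendsto_T (A := A) (E := E) hq0 hq1 hr
  set Tn : ℕ → ℂ := fun n => ∑' j : ℕ, SnAux.uf q A r E n j with hTn
  have hSn : ∀ n : ℕ, (∑' k : ℕ, q ^ (k + 1) * Rc A r n q (q ^ (k + 1)))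
      = SnAux.Wf q A r E n 0 * Tn n := by
    intro n
    set f : ℕ → ℂ := fun k => q ^ (k + 1) * Rc A r n q (q ^ (k + 1)) with hf
    have hfW : ∀ j : ℕ, f (j + r * n) = SnAux.Wf q A r E n j := by
      intro j
      have h1 : j + r * n + 1 = r * n + 1 + j := by omega
      rw [hf]
      simp only []
      rw [h1]
      exact SnAux.Rc_eval hq0 hE n j
    have hsum2 : Summable (fun j : ℕ => f (j + r * n)) := by
      apply Summable.congr (f := fun j => SnAux.Wf q A r E n j) ?_ (fun j => (hfW j).symm)
      exact Summable.congr ((SnAux.summable_uf hq1 A r E n).mul_left (SnAux.Wf q A r E n 0))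
        (fun j => (SnAux.Wf_eq hq1 A r E n j).symm)
    have hsum : Summable f := (summable_nat_add_iff (r * n)).mp hsum2
    have hzero : ∑ k ∈ Finset.range (r * n), f k = 0 := by
      apply Finset.sum_eq_zero
      intro k hk
      have hk2 : k + 1 ≤ r * n := Finset.mem_range.mp hk
      rw [hf]
      simp only []
      rw [SnAux.Rc_vanish hq0 (by omega : 1 ≤ k + 1) hk2, mul_zero]
    calc ∑' k, f k = ∑ k ∈ Finset.range (r * n), f k + ∑' j, f (j + r * n) :=
          (Summable.sum_add_tsum_nat_add _ hsum).symm
    _ = ∑' j, SnAux.Wf q A r E n j := by rw [hzero, zero_add]; exact tsum_congr hfW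
    _ = ∑' j, SnAux.Wf q A r E n 0 * SnAux.uf q A r E n j :=
          tsum_congr (fun j => SnAux.Wf_eq hq1 A r E n j)
    _ = SnAux.Wf q A r E n 0 * Tn n := tsum_mul_left
  have hTnne : ∀ᶠ n : ℕ in Filter.atTop, Tn n ≠ 0 := hTL.eventually_ne hL0
  have habsT : Filter.Tendsto (fun n => Complex.abs (Tn n)) Filter.atTop
      (nhds (Complex.abs L)) := (Complex.continuous_abs.tendsto L).comp hTL
  have hlogT : Filter.Tendsto (fun n => Real.log (Complex.abs (Tn n))) Filter.atTop
      (nhds (Real.log (Complex.abs L))) :=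
    ((Real.continuousAt_log (Complex.abs.pos hL0).ne').tendsto).comp habsT
  have hpart2 : Filter.Tendsto (fun n : ℕ => (1 / (n : ℝ) ^ 2) *
      Real.log (Complex.abs (Tn n))) Filter.atTop (nhds 0) := by
    have := SnAux.one_div_sq_tendsto.mul hlogT
    rw [zero_mul] at this
    exact this
  have hpart1 := SnAux.tendsto_log_W0 (A := A) (r := r) (E := E) hq0 hq1 hr2
  have hfinal := hpart1.add hpart2
  rw [add_zero] at hfinal
  have hev : ∀ᶠ n : ℕ in Filter.atTop,
      (1 / (n : ℝ) ^ 2) * Real.log (Complex.abs (SnAux.Wf q A r E n 0))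
        + (1 / (n : ℝ) ^ 2) * Real.log (Complex.abs (Tn n))
      = (1 / (n : ℝ) ^ 2) *
          Real.log (Complex.abs (∑' k : ℕ, q ^ (k + 1) * Rc A r n q (q ^ (k + 1)))) := by
    filter_upwards [hTnne] with n hn
    rw [hSn n, map_mul, Real.log_mul]
    · ring
    · exact (Complex.abs.pos (SnAux.Wf0_ne_zero hq0 hq1 hr2 n)).ne'
    · exact (Complex.abs.pos hn).ne'
  have hval : ((r : ℝ) * E) * Real.log ρ
      = -(1 / 2) * r * ((A : ℝ) - 2 * r) * Real.log (1 / ρ) := by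
    rw [one_div ρ, Real.log_inv]
    have hcast : ((A : ℝ) - 2 * r) = 2 * (E : ℝ) := by
      have h2 : ((A - 2 * r : ℕ) : ℝ) = (A : ℝ) - 2 * r := by
        push_cast [Nat.cast_sub hr2]
        ring
      rw [← h2, hE]
      push_cast
      ring
    rw [hcast]
    ring
  rw [← hval]
  exact Filter.Tendsto.congr' hev hfinal
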